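/- arXiv:1802.03936 — 3 statements merged into one kernel-verified Lean document; each statement's English description precedes it below -/
import Mathlib

section
/- Let Σ be a positive-definite symmetric c×c matrix with trace Tr(Σ). Then the minimum over orthogonal matrices R of ∑_{i=1}^c ((RΣRᵀ)_{ii})^(-1/2) is at least c^(3/2) · Tr(Σ)^(-1/2), and this bound is attained by any orthogonal R such that all diagonal entries of RΣRᵀ are equal (to Tr(Σ)/c). -/
open Matrix Finset

-- key analytic inequality
lemma key_ineq (c : ℕ) (hc : 0 < c) (d : Fin c → ℝ) (hd : ∀ i, 0 < d i) :
    (c : ℝ) ^ ((3 : ℝ) / 2) * (∑ i, d i) ^ (-(1 : ℝ) / 2) ≤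
      ∑ i, (d i) ^ (-(1 : ℝ) / 2) := by
  set T := ∑ i, d i with hTdef
  have hT : 0 < T := Finset.sum_pos (fun i _ => hd i) (by simp [Finset.univ_nonempty_iff]; exact Fin.pos_iff_nonempty.mp hc)
  have hcR : (0:ℝ) < c := Nat.cast_pos.mpr hc
  -- rewrite rpow as sqrt inverses
  have hrw : ∀ x : ℝ, 0 < x → x ^ (-(1:ℝ)/2) = (Real.sqrt x)⁻¹ := by
    intro x hx
    rw [show -(1:ℝ)/2 = -(1/2) by ring, Real.rpow_neg hx.le, ← Real.sqrt_eq_rpow]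
  have hA : ∑ i, (d i) ^ (-(1:ℝ)/2) = ∑ i, (Real.sqrt (d i))⁻¹ :=
    Finset.sum_congr rfl fun i _ => hrw _ (hd i)
  set A := ∑ i, (Real.sqrt (d i))⁻¹ with hAdef
  have hApos : 0 < A := Finset.sum_pos (fun i _ => inv_pos.mpr (Real.sqrt_pos.mpr (hd i)))
    (Finset.univ_nonempty_iff.mpr (Fin.pos_iff_nonempty.mp hc))
  set B := ∑ i, Real.sqrt (d i) with hBdef
  -- Cauchy-Schwarz 1 : c^2 ≤ B * A
  have h1 : (c:ℝ)^2 ≤ B * A := by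
    have := Finset.sum_mul_sq_le_sq_mul_sq Finset.univ
      (fun i => Real.sqrt (Real.sqrt (d i))) (fun i => (Real.sqrt (Real.sqrt (d i)))⁻¹)
    have heq : ∀ i : Fin c, Real.sqrt (Real.sqrt (d i)) * (Real.sqrt (Real.sqrt (d i)))⁻¹ = 1 := by
      intro i
      exact mul_inv_cancel₀ (ne_of_gt (Real.sqrt_pos.mpr (Real.sqrt_pos.mpr (hd i))))
    simp only [heq, Finset.sum_const, Finset.card_univ, Fintype.card_fin, nsmul_eq_mul, mul_one] at this
    calc (c:ℝ)^2 ≤ _ := this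
      _ = B * A := by
          congr 1
          · exact Finset.sum_congr rfl fun i _ => Real.sq_sqrt (Real.sqrt_nonneg _)
          · refine Finset.sum_congr rfl fun i _ => ?_
            rw [inv_pow, sq, Real.mul_self_sqrt (Real.sqrt_nonneg _)]
  -- Cauchy-Schwarz 2 : B ≤ √c * √T
  have h2 : B ≤ Real.sqrt c * Real.sqrt T := by
    have hB2 : B^2 ≤ c * T := by
      have := sq_sum_le_card_mul_sum_sq (s := Finset.univ) (f := fun i => Real.sqrt (d i))
      calc B^2 ≤ (Finset.univ.card : ℝ) * ∑ i, Real.sqrt (d i) ^ 2 := by exact_mod_cast this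
        _ = c * T := by
            rw [Finset.card_univ, Fintype.card_fin,
              Finset.sum_congr rfl (fun i _ => Real.sq_sqrt (hd i).le)]
    have hBnn : 0 ≤ B := Finset.sum_nonneg fun i _ => Real.sqrt_nonneg _
    have : B ≤ Real.sqrt (c * T) := by
      rw [← Real.sqrt_sq hBnn]
      exact Real.sqrt_le_sqrt hB2
    rwa [Real.sqrt_mul (by positivity)] at this
  -- combine
  rw [hA, hrw T hT]
  have h32 : (c:ℝ) ^ ((3:ℝ)/2) = c * Real.sqrt c := by
    rw [Real.sqrt_eq_rpow, show (3:ℝ)/2 = 1 + 1/2 by norm_num, Real.rpow_add hcR, Real.rpow_one]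
  rw [h32]
  have hsT : 0 < Real.sqrt T := Real.sqrt_pos.mpr hT
  have hsc : 0 < Real.sqrt c := Real.sqrt_pos.mpr hcR
  rw [mul_inv_le_iff₀ hsT]
  have h3 : (c:ℝ)^2 ≤ Real.sqrt c * Real.sqrt T * A :=
    h1.trans (mul_le_mul_of_nonneg_right h2 hApos.le)
  have hscc : Real.sqrt c * Real.sqrt c = c := Real.mul_self_sqrt hcR.le
  nlinarith [h3, hscc, hsc, hsT, hApos]

theorem min_sum_inv_sqrt_diag_conj
    (c : ℕ) (hc : 0 < c) (S : Matrix (Fin c) (Fin c) ℝ)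
    (hS : S.IsSymm) (hpd : S.PosDef) :
    (∀ R : Matrix (Fin c) (Fin c) ℝ, R * Rᵀ = 1 →
      (c : ℝ) ^ ((3 : ℝ) / 2) * S.trace ^ (-(1 : ℝ) / 2) ≤
        ∑ i, ((R * S * Rᵀ) i i) ^ (-(1 : ℝ) / 2)) ∧
    (∀ R : Matrix (Fin c) (Fin c) ℝ, R * Rᵀ = 1 →
      (∀ i, (R * S * Rᵀ) i i = S.trace / c) →
      ∑ i, ((R * S * Rᵀ) i i) ^ (-(1 : ℝ) / 2) =
        (c : ℝ) ^ ((3 : ℝ) / 2) * S.trace ^ (-(1 : ℝ) / 2)) := by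
  have hcR : (0:ℝ) < c := Nat.cast_pos.mpr hc
  have hdiag : ∀ (R : Matrix (Fin c) (Fin c) ℝ), R * Rᵀ = 1 →
      ∀ i, 0 < (R * S * Rᵀ) i i := by
    intro R hR i
    have hxne : (fun j => R i j) ≠ 0 := by
      intro h
      have h1 : (R * Rᵀ) i i = (1 : Matrix (Fin c) (Fin c) ℝ) i i := by rw [hR]
      rw [Matrix.mul_apply] at h1
      simp only [Matrix.one_apply_eq, Matrix.transpose_apply] at h1
      have : ∀ j, R i j = 0 := fun j => congrFun h j
      simp [this] at h1
    have hp := hpd.dotProduct_mulVec_pos hxne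
    have heq : (R * S * Rᵀ) i i = dotProduct (star (fun j => R i j)) (S *ᵥ (fun j => R i j)) := by
      simp only [Matrix.mul_apply, Matrix.transpose_apply, dotProduct, Matrix.mulVec, star_trivial,
        Finset.sum_mul, Finset.mul_sum, dotProduct]
      rw [Finset.sum_comm]
      congr 1; ext j; congr 1; ext k; ring
    rw [heq]; exact hp
  have hTpos : 0 < S.trace := by
    have h1 : (1 : Matrix (Fin c) (Fin c) ℝ) * (1 : Matrix (Fin c) (Fin c) ℝ)ᵀ = 1 := by simp
    have := hdiag 1 h1
    have htr1 : S.trace = ∑ i, ((1:Matrix (Fin c) (Fin c) ℝ) * S * (1:Matrix (Fin c) (Fin c) ℝ)ᵀ) i i := by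
      simp [Matrix.trace, Matrix.diag]
    rw [htr1]
    exact Finset.sum_pos (fun i _ => this i) (Finset.univ_nonempty_iff.mpr (Fin.pos_iff_nonempty.mp hc))
  have htr : ∀ (R : Matrix (Fin c) (Fin c) ℝ), R * Rᵀ = 1 →
      ∑ i, (R * S * Rᵀ) i i = S.trace := by
    intro R hR
    have : (R * S * Rᵀ).trace = S.trace := by
      rw [Matrix.trace_mul_cycle, mul_eq_one_comm.mp hR, Matrix.one_mul]
    simpa [Matrix.trace, Matrix.diag] using this
  constructor
  · intro R hR
    have := key_ineq c hc (fun i => (R * S * Rᵀ) i i) (hdiag R hR)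
    rwa [htr R hR] at this
  · intro R hR heq
    have hsum : ∑ i, ((R * S * Rᵀ) i i) ^ (-(1:ℝ)/2) = c * (S.trace / c) ^ (-(1:ℝ)/2) := by
      rw [Finset.sum_congr rfl fun i _ => by rw [heq i]]
      simp [Finset.card_univ]
    rw [hsum, Real.div_rpow hTpos.le hcR.le, div_eq_mul_inv,
      ← Real.rpow_neg_one ((c:ℝ) ^ (-(1:ℝ)/2)), ← Real.rpow_mul hcR.le,
      show (-(1:ℝ)/2 * -1) = 1/2 by norm_num,
      show (3:ℝ)/2 = 1 + 1/2 by norm_num, Real.rpow_add hcR, Real.rpow_one]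
    ring
end

section
/- Let Y₁, Y₂ be ℝᶜ-valued random vectors with the same distribution, such that each coordinate of Y₁ is a mean-zero Gaussian with variance σᵢ², ∑ σᵢ² = C, all σᵢ equal, and ‖Y₁ − Y₂‖₂ ≤ ε almost surely. Then the probability that sign(Y₁) ≠ sign(Y₂) in at least one coordinate is at most 2ε·√(2/π)·c^(3/2)·C^(-1/2). -/
open MeasureTheory ProbabilityTheory Real

noncomputable def rsign (x : ℝ) : ℝ := if 0 ≤ x then 1 else -1

lemma abs_coord_le_norm {c : ℕ} (x : EuclideanSpace ℝ (Fin c)) (i : Fin c) :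
    |x i| ≤ ‖x‖ := by
  rw [EuclideanSpace.norm_eq]
  have h1 : |x i| = Real.sqrt ((x i) ^ 2) := by
    rw [Real.sqrt_sq_eq_abs]
  rw [h1]
  apply Real.sqrt_le_sqrt
  have := Finset.single_le_sum (f := fun j => ‖x j‖ ^ 2)
    (fun j _ => by positivity) (Finset.mem_univ i)
  simpa [Real.norm_eq_abs, sq_abs] using this

lemma gaussian_interval_le (v : NNReal) (hv : v ≠ 0) (ε : ℝ) (hε : 0 < ε) :
    gaussianReal 0 v {x : ℝ | |x| ≤ ε} ≤
      ENNReal.ofReal (2 * ε / Real.sqrt (2 * π * v)) := by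
  rw [gaussianReal_apply 0 hv]
  have hbd : ∀ x : ℝ, gaussianPDF 0 v x ≤
      ENNReal.ofReal ((Real.sqrt (2 * π * v))⁻¹) := by
    intro x
    rw [gaussianPDF, gaussianPDFReal]
    apply ENNReal.ofReal_le_ofReal
    have h1 : rexp (-(x - 0) ^ 2 / (2 * v)) ≤ 1 := by
      apply Real.exp_le_one_iff.2
      have : (0:ℝ) < 2 * (v:ℝ) := by positivity
      apply div_nonpos_of_nonpos_of_nonneg <;> nlinarith [sq_nonneg (x - 0)]
    have h2 : (0:ℝ) ≤ (Real.sqrt (2 * π * v))⁻¹ := by positivity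
    calc (Real.sqrt (2 * π * v))⁻¹ * rexp (-(x - 0) ^ 2 / (2 * v))
        ≤ (Real.sqrt (2 * π * v))⁻¹ * 1 := by
          exact mul_le_mul_of_nonneg_left h1 h2
      _ = (Real.sqrt (2 * π * v))⁻¹ := mul_one _
  calc ∫⁻ x in {x : ℝ | |x| ≤ ε}, gaussianPDF 0 v x
      ≤ ∫⁻ _ in {x : ℝ | |x| ≤ ε}, ENNReal.ofReal ((Real.sqrt (2 * π * v))⁻¹) :=
        lintegral_mono (fun x => hbd x)
    _ = ENNReal.ofReal ((Real.sqrt (2 * π * v))⁻¹) * volume {x : ℝ | |x| ≤ ε} := by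
        rw [MeasureTheory.setLIntegral_const]
    _ ≤ ENNReal.ofReal (2 * ε / Real.sqrt (2 * π * v)) := by
        have hset : {x : ℝ | |x| ≤ ε} = Set.Icc (-ε) ε := by
          ext x; simp [abs_le]
        rw [hset, Real.volume_Icc, ← ENNReal.ofReal_mul (by positivity)]
        apply ENNReal.ofReal_le_ofReal
        rw [div_eq_mul_inv]
        have : ε - -ε = 2 * ε := by ring
        rw [this]
        exact le_of_eq (by ring)

theorem prob_sign_mismatch_le
    (c : ℕ) (hc : 0 < c) (C : ℝ) (hC : 0 < C) (ε : ℝ) (hε : 0 < ε)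
    (Ω : Type*) [MeasureSpace Ω] [IsProbabilityMeasure (ℙ : Measure Ω)]
    (Y₁ Y₂ : Ω → EuclideanSpace ℝ (Fin c))
    (hm₁ : Measurable Y₁) (hm₂ : Measurable Y₂)
    (hident : Measure.map Y₁ ℙ = Measure.map Y₂ ℙ)
    (hlaw : ∀ i, Measure.map (fun ω => Y₁ ω i) ℙ =
      gaussianReal 0 (Real.toNNReal (C / c)))
    (hclose : ∀ᵐ ω ∂ℙ, ‖Y₁ ω - Y₂ ω‖ ≤ ε) :
    ℙ {ω | ∃ i, rsign (Y₁ ω i) ≠ rsign (Y₂ ω i)} ≤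
      ENNReal.ofReal (2 * ε * Real.sqrt (2 / π) * (c : ℝ) ^ ((3 : ℝ) / 2) *
        C ^ (-(1 : ℝ) / 2)) := by
  have hcR : (0:ℝ) < c := Nat.cast_pos.2 hc
  set v : NNReal := Real.toNNReal (C / c) with hv
  have hv0 : v ≠ 0 := by
    simp only [hv, ne_eq, Real.toNNReal_eq_zero, not_le]
    positivity
  -- Step 1: event ⊆ ∪ i, {|Y₁ i| ≤ ε} a.e.
  have hstep1 : ℙ {ω | ∃ i, rsign (Y₁ ω i) ≠ rsign (Y₂ ω i)} ≤
      ℙ (⋃ i, {ω | |Y₁ ω i| ≤ ε}) := by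
    apply measure_mono_ae
    filter_upwards [hclose] with ω hω hmem
    obtain ⟨i, hi⟩ := hmem
    refine Set.mem_iUnion.2 ⟨i, ?_⟩
    have hcoord : |Y₁ ω i - Y₂ ω i| ≤ ε := by
      have := abs_coord_le_norm (Y₁ ω - Y₂ ω) i
      simp only [PiLp.sub_apply] at this
      linarith
    simp only [Set.mem_setOf_eq]
    by_cases h1 : 0 ≤ Y₁ ω i <;> by_cases h2 : 0 ≤ Y₂ ω i <;>
      simp [rsign, h1, h2] at hi ⊢ <;>
      rw [abs_le] <;> constructor <;>
      cases' abs_le.1 hcoord with hl hr <;> linarith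
  -- Step 2: union bound and per-coordinate bound
  have hcoordmeas : ∀ i : Fin c, Measurable fun ω => Y₁ ω i := by
    intro i
    exact ((EuclideanSpace.proj i :
      EuclideanSpace ℝ (Fin c) →L[ℝ] ℝ).continuous.measurable).comp hm₁
  have hstep2 : ∀ i : Fin c, ℙ {ω | |Y₁ ω i| ≤ ε} ≤
      ENNReal.ofReal (2 * ε / Real.sqrt (2 * π * v)) := by
    intro i
    have hmeasset : MeasurableSet {x : ℝ | |x| ≤ ε} := by
      have : {x : ℝ | |x| ≤ ε} = Set.Icc (-ε) ε := by ext x; simp [abs_le]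
      rw [this]; exact measurableSet_Icc
    have : ℙ {ω | |Y₁ ω i| ≤ ε} = (gaussianReal 0 v) {x : ℝ | |x| ≤ ε} := by
      rw [← hlaw i, Measure.map_apply (hcoordmeas i) hmeasset]
      rfl
    rw [this]
    exact gaussian_interval_le v hv0 ε hε
  have hunion : ℙ (⋃ i, {ω | |Y₁ ω i| ≤ ε}) ≤
      (c : ENNReal) * ENNReal.ofReal (2 * ε / Real.sqrt (2 * π * v)) := by
    calc ℙ (⋃ i, {ω | |Y₁ ω i| ≤ ε}) ≤ ∑ i : Fin c, ℙ {ω | |Y₁ ω i| ≤ ε} :=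
          measure_iUnion_fintype_le _ _
      _ ≤ ∑ _i : Fin c, ENNReal.ofReal (2 * ε / Real.sqrt (2 * π * v)) :=
          Finset.sum_le_sum (fun i _ => hstep2 i)
      _ = (c : ENNReal) * ENNReal.ofReal (2 * ε / Real.sqrt (2 * π * v)) := by
          simp [Finset.sum_const, nsmul_eq_mul]
  -- Step 3: arithmetic
  have hvval : (v : ℝ) = C / c := by
    rw [hv, Real.coe_toNNReal _ (by positivity)]
  have hfinal : (c : ℝ) * (2 * ε / Real.sqrt (2 * π * v)) ≤
      2 * ε * Real.sqrt (2 / π) * (c : ℝ) ^ ((3 : ℝ) / 2) * C ^ (-(1 : ℝ) / 2) := by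
    rw [hvval]
    have hπ : (0:ℝ) < π := Real.pi_pos
    have hc32 : (c:ℝ) ^ ((3:ℝ)/2) = c * Real.sqrt c := by
      rw [show (3:ℝ)/2 = 1 + 1/2 by norm_num, Real.rpow_add hcR, Real.rpow_one,
        ← Real.sqrt_eq_rpow]
    have hCn : C ^ (-(1:ℝ)/2) = (Real.sqrt C)⁻¹ := by
      rw [show -(1:ℝ)/2 = -(1/2) by norm_num, Real.rpow_neg hC.le, ← Real.sqrt_eq_rpow]
    have hsqv : Real.sqrt (2 * π * (C / c)) =
        Real.sqrt 2 * Real.sqrt π * Real.sqrt C / Real.sqrt c := by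
      rw [Real.sqrt_mul (by positivity), Real.sqrt_div hC.le,
        Real.sqrt_mul (by norm_num)]
      ring
    have hsq2π : Real.sqrt (2 / π) = Real.sqrt 2 / Real.sqrt π :=
      Real.sqrt_div (by norm_num) π
    rw [hc32, hCn, hsqv, hsq2π]
    have hs2 : (0:ℝ) < Real.sqrt 2 := Real.sqrt_pos.2 (by norm_num)
    have hsp : (0:ℝ) < Real.sqrt π := Real.sqrt_pos.2 hπ
    have hsc : (0:ℝ) < Real.sqrt c := Real.sqrt_pos.2 hcR
    have hsC : (0:ℝ) < Real.sqrt C := Real.sqrt_pos.2 hC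
    have h22 : Real.sqrt 2 * Real.sqrt 2 = 2 := Real.mul_self_sqrt (by norm_num)
    have heq : 2 * ((c:ℝ) * (2 * ε * Real.sqrt c / (Real.sqrt 2 * Real.sqrt π * Real.sqrt C)))
        = 2 * ε * (Real.sqrt 2 / Real.sqrt π) * ((c:ℝ) * Real.sqrt c) * (Real.sqrt C)⁻¹ := by
      field_simp
      ring_nf
      rw [Real.sq_sqrt (show (0:ℝ) ≤ 2 by norm_num)]
    have hL : (0:ℝ) ≤ (c:ℝ) * (2 * ε * Real.sqrt c / (Real.sqrt 2 * Real.sqrt π * Real.sqrt C)) := by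
      positivity
    calc (c:ℝ) * (2 * ε / (Real.sqrt 2 * Real.sqrt π * Real.sqrt C / Real.sqrt c))
        = (c:ℝ) * (2 * ε * Real.sqrt c / (Real.sqrt 2 * Real.sqrt π * Real.sqrt C)) := by
          rw [div_div_eq_mul_div]
      _ ≤ 2 * ((c:ℝ) * (2 * ε * Real.sqrt c / (Real.sqrt 2 * Real.sqrt π * Real.sqrt C))) := by
          linarith
      _ = _ := heq
  calc ℙ {ω | ∃ i, rsign (Y₁ ω i) ≠ rsign (Y₂ ω i)}
      ≤ (c : ENNReal) * ENNReal.ofReal (2 * ε / Real.sqrt (2 * π * v)) :=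
        le_trans hstep1 hunion
    _ = ENNReal.ofReal ((c : ℝ) * (2 * ε / Real.sqrt (2 * π * v))) := by
        rw [ENNReal.ofReal_mul (by positivity), ENNReal.ofReal_natCast]
    _ ≤ _ := ENNReal.ofReal_le_ofReal hfinal
end

section
/- Let Σ be symmetric with Σ_{jj} ≤ τ ≤ Σ_{ii}, where τ is any value between the two diagonal entries. Then there exists θ ∈ ℝ such that after conjugation by the Givens rotation G(i,j,θ), the new (j,j) diagonal entry equals τ. -/
open Matrix Real

noncomputable def givens (c : ℕ) (i j : Fin c) (θ : ℝ) :
    Matrix (Fin c) (Fin c) ℝ :=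
  Matrix.of fun k l =>
    if k = i then (if l = i then Real.cos θ else if l = j then Real.sin θ else 0)
    else if k = j then (if l = i then -Real.sin θ else if l = j then Real.cos θ else 0)
    else if k = l then 1 else 0

theorem exists_givens_diag_eq
    (c : ℕ) (S : Matrix (Fin c) (Fin c) ℝ) (hS : S.IsSymm)
    (i j : Fin c) (hij : i ≠ j) (τ : ℝ)
    (hτ₁ : S j j ≤ τ) (hτ₂ : τ ≤ S i i) :
    ∃ θ : ℝ, (givens c i j θ * S * (givens c i j θ)ᵀ) j j = τ := by
  have hrow : ∀ (θ : ℝ) (l : Fin c), givens c i j θ j l =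
      (-Real.sin θ) * (if l = i then 1 else 0) + Real.cos θ * (if l = j then 1 else 0) := by
    intro θ l
    simp only [givens, Matrix.of_apply, if_neg hij, if_pos rfl]
    rcases eq_or_ne l i with rfl | hli
    · simp [hij, hij.symm]
    · rcases eq_or_ne l j with rfl | hlj <;> simp [hli, *]
  have key : ∀ θ : ℝ, (givens c i j θ * S * (givens c i j θ)ᵀ) j j =
      (Real.sin θ)^2 * S i i + (Real.cos θ)^2 * S j j
        - Real.sin θ * Real.cos θ * (S i j + S j i) := by
    intro θ
    have h1 : ∀ k, (givens c i j θ * S) j k = (-Real.sin θ) * S i k + Real.cos θ * S j k := by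
      intro k
      rw [Matrix.mul_apply]
      simp only [hrow, add_mul, mul_assoc, ite_mul, one_mul, zero_mul]
      rw [Finset.sum_add_distrib, ← Finset.mul_sum, ← Finset.mul_sum]
      simp
    rw [Matrix.mul_apply]
    simp only [Matrix.transpose_apply, h1, hrow, mul_add, mul_ite, mul_one, mul_zero]
    rw [Finset.sum_add_distrib]
    simp only [Finset.sum_ite_eq', Finset.mem_univ, if_pos]
    ring
  have hcont : Continuous fun θ : ℝ =>
      (Real.sin θ)^2 * S i i + (Real.cos θ)^2 * S j j
        - Real.sin θ * Real.cos θ * (S i j + S j i) := by fun_prop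
  have h0 : (0:ℝ) ≤ π / 2 := by positivity
  have := intermediate_value_Icc h0 hcont.continuousOn
  simp only [Real.sin_zero, Real.cos_zero, Real.sin_pi_div_two, Real.cos_pi_div_two] at this
  have hmem : τ ∈ Set.Icc ((0:ℝ)^2 * S i i + 1^2 * S j j - 0 * 1 * (S i j + S j i))
      (1^2 * S i i + 0^2 * S j j - 1 * 0 * (S i j + S j i)) := by
    constructor <;> simp <;> linarith
  obtain ⟨θ, _, hθ⟩ := this hmem
  exact ⟨θ, by rw [key]; exact hθ⟩
end
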